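/- Let E be a complex locally convex space, U ⊆ E an open absolutely convex 0-neighbourhood, F a complex locally convex space, and f : U → F a complex analytic function with bounded image, i.e., M_p := sup p(f(U)) < ∞ for each continuous seminorm p on F. Let q be the Minkowski functional of (1/3)U. Then for all v, w ∈ (1/3)U and every continuous seminorm p on F, p(f(w) − f(v)) ≤ M_p · q(w − v); in particular the restriction of f to (1/3)U is Lipschitz continuous. -/

import Mathlib

/-!
Fix `t` with `q (w - v) < t < 2` and put `u = t⁻¹ • (w - v) ∈ (1/3)U`. By convexity and
balancedness, `v + z • u ∈ U` for `‖z‖ < 2`. A Hahn–Banach functional `ℓ` with `‖ℓ x‖ ≤ p x` and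
`ℓ (f w - f v) = p (f w - f v)` turns `z ↦ ℓ (f (v + z • u))` into a holomorphic function on the
disc of radius `2` (from the local power series of `f`) that maps into the closed disc of radius
`2M` around its value at `0`. The Schwarz lemma at `z = t` gives `p (f w - f v) ≤ M t`; now let
`t` decrease to `q (w - v)`.
-/

open Set Pointwise

/-- A map between complex topological vector spaces is complex analytic on an open set if
it is continuous there and locally given by a pointwise convergent series of continuous
homogeneous polynomials (values of continuous multilinear maps on the diagonal). -/
def IsCAnalyticOn {E F : Type*} [AddCommGroup E] [Module ℂ E] [TopologicalSpace E]
    [AddCommGroup F] [Module ℂ F] [TopologicalSpace F] (f : E → F) (U : Set E) : Prop :=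
  ContinuousOn f U ∧ ∀ x ∈ U,
    ∃ (p : (k : ℕ) → ContinuousMultilinearMap ℂ (fun _ : Fin k => E) F) (V : Set E),
      IsOpen V ∧ x ∈ V ∧ V ⊆ U ∧ ∀ y ∈ V, HasSum (fun k => p k fun _ => y - x) (f y)

open Metric Filter

theorem Seminorm.exists_continuousLinearMap_norm_le_eq {𝕜 F : Type*} [RCLike 𝕜]
    [AddCommGroup F] [Module 𝕜 F] [TopologicalSpace F] [IsTopologicalAddGroup F]
    (p : Seminorm 𝕜 F) (hp : Continuous p) (y : F) :
    ∃ ℓ : F →L[𝕜] 𝕜, (∀ x, ‖ℓ x‖ ≤ p x) ∧ ℓ y = p y := by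
  obtain ⟨ℓ, hℓ, hℓy⟩ : ∃ ℓ : Module.Dual 𝕜 F, (∀ x, ‖ℓ x‖ ≤ p x) ∧ ℓ y = p y := by
    rcases eq_or_ne y 0 with rfl | hy
    · exact ⟨0, fun x => by simp, by simp⟩
    obtain ⟨ℓ, hℓy, hℓ⟩ := Module.Dual.exists_extension_of_le_seminorm (𝕜 ∙ y)
      ((p y : 𝕜) • LinearEquiv.coord 𝕜 F y hy) (p := p) fun x => by
        conv_rhs => rw [← LinearEquiv.coord_apply_smul 𝕜 F y hy x, map_smul_eq_mul]
        simp [norm_smul, abs_of_nonneg (apply_nonneg p y), mul_comm]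
    refine ⟨ℓ, hℓ, ?_⟩
    simpa [LinearEquiv.coord_self, Algebra.smul_def] using
      hℓy ⟨y, Submodule.mem_span_singleton_self y⟩
  refine ⟨⟨ℓ, continuous_of_continuousAt_zero ℓ ?_⟩, hℓ, hℓy⟩
  rw [ContinuousAt, map_zero]
  exact squeeze_zero_norm hℓ (map_zero p ▸ hp.tendsto 0)

section ComplexLine

variable {E F : Type*} [AddCommGroup E] [Module ℂ E] [TopologicalSpace E] [ContinuousAdd E]
  [ContinuousSMul ℂ E] [AddCommGroup F] [Module ℂ F] [TopologicalSpace F]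
  {f : E → F} {U : Set E} {v u : E}

theorem IsCAnalyticOn.analyticAt_comp_line {G : Type*} [NormedAddCommGroup G] [NormedSpace ℂ G]
    (hf : IsCAnalyticOn f U) (ℓ : F →L[ℂ] G) {z₀ : ℂ} (hz₀ : v + z₀ • u ∈ U) :
    AnalyticAt ℂ (fun z : ℂ => ℓ (f (v + z • u))) z₀ := by
  obtain ⟨P, V, hVo, hz₀V, -, hP⟩ := hf.2 _ hz₀
  refine ⟨fun k => ContinuousMultilinearMap.mkPiRing ℂ (Fin k) (ℓ (P k fun _ => u)),
    hasFPowerSeriesAt_iff'.2 ?_⟩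
  have hline : Continuous fun z : ℂ => v + z • u := by fun_prop
  filter_upwards [hline.continuousAt.preimage_mem_nhds (hVo.mem_nhds hz₀V)] with z hz
  have hsub : v + z • u - (v + z₀ • u) = (z - z₀) • u := by rw [sub_smul]; abel
  simpa [hsub, FormalMultilinearSeries.coeff, ContinuousMultilinearMap.map_smul_univ]
    using (hP _ hz).mapL ℓ

theorem IsCAnalyticOn.seminorm_sub_le_of_line [IsTopologicalAddGroup F] (hf : IsCAnalyticOn f U)
    {p : Seminorm ℂ F} (hp : Continuous p) {M : ℝ} (hM : ∀ x ∈ U, p (f x) ≤ M) {R : ℝ}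
    (hline : ∀ z : ℂ, ‖z‖ < R → v + z • u ∈ U) {z : ℂ} (hz : ‖z‖ < R) :
    p (f (v + z • u) - f v) ≤ 2 * M / R * ‖z‖ := by
  obtain ⟨ℓ, hℓ, hℓy⟩ := p.exists_continuousLinearMap_norm_le_eq hp (f (v + z • u) - f v)
  set h : ℂ → ℂ := fun ζ => ℓ (f (v + ζ • u))
  have hd : DifferentiableOn ℂ h (ball 0 R) := fun ζ hζ =>
    (hf.analyticAt_comp_line ℓ (hline ζ (mem_ball_zero_iff.1 hζ))).differentiableAt
      |>.differentiableWithinAt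
  have hbound : ∀ ζ ∈ ball (0 : ℂ) R, ‖h ζ‖ ≤ M := fun ζ hζ =>
    (hℓ _).trans (hM _ (hline ζ (mem_ball_zero_iff.1 hζ)))
  have hmaps : MapsTo h (ball 0 R) (closedBall (h 0) (2 * M)) := fun ζ hζ => by
    rw [mem_closedBall, dist_eq_norm, two_mul]
    exact (norm_sub_le _ _).trans
      (add_le_add (hbound ζ hζ) (hbound 0 (mem_ball_self ((norm_nonneg z).trans_lt hz))))
  calc p (f (v + z • u) - f v) = ‖h z - h 0‖ := by simp [h, ← map_sub, hℓy, abs_of_nonneg]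
    _ ≤ 2 * M / R * ‖z‖ := by
      simpa [dist_eq_norm] using
        Complex.dist_le_div_mul_dist_of_mapsTo_ball hd hmaps (mem_ball_zero_iff.2 hz)

end ComplexLine

theorem add_smul_mem_of_mem_inv_three_smul {E : Type*} [AddCommGroup E] [Module ℂ E] [Module ℝ E]
    [IsScalarTower ℝ ℂ E] {U : Set E} (hUconv : Convex ℝ U) (hUbal : Balanced ℂ U) {v u : E}
    (hv : v ∈ (3 : ℝ)⁻¹ • U) (hu : u ∈ (3 : ℝ)⁻¹ • U) {z : ℂ} (hz : ‖z‖ ≤ 2) :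
    v + z • u ∈ U := by
  obtain ⟨a, ha, rfl⟩ := hv
  obtain ⟨b, hb, rfl⟩ := hu
  have hzb : (z / 2) • b ∈ U := hUbal.smul_mem (by rw [norm_div]; norm_num; linarith) hb
  convert hUconv ha hzb (a := 3⁻¹) (b := 2 / 3) (by norm_num) (by norm_num) (by norm_num) using 2
  rw [← algebraMap_smul ℂ (2 / 3 : ℝ), smul_smul, smul_comm, ← algebraMap_smul ℂ (3⁻¹ : ℝ),
    smul_smul]
  congr 1
  simp only [Complex.coe_algebraMap]
  push_cast
  ring

section Gauge

variable {E : Type*} [AddCommGroup E] [Module ℝ E] [TopologicalSpace E] [ContinuousSMul ℝ E]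
  {s : Set E}

theorem inv_smul_mem_of_gauge_lt (hconv : Convex ℝ s) (h0 : (0 : E) ∈ s) (hopen : IsOpen s)
    {x : E} {t : ℝ} (hx : gauge s x < t) : t⁻¹ • x ∈ s := by
  have ht : 0 < t := (gauge_nonneg x).trans_lt hx
  rw [← setOfPred_gauge_lt_one_eq_self_of_isOpen hconv h0 hopen, mem_ofPred_eq,
    gauge_smul_of_nonneg (inv_nonneg.2 ht.le), smul_eq_mul, inv_mul_lt_one₀ ht]
  exact hx

theorem gauge_sub_lt_two (hconv : Convex ℝ s) (h0 : (0 : E) ∈ s) (hopen : IsOpen s)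
    (hneg : ∀ x ∈ s, -x ∈ s) {v w : E} (hv : v ∈ s) (hw : w ∈ s) : gauge s (w - v) < 2 := calc
  gauge s (w - v) ≤ gauge s w + gauge s (-v) := by
    rw [sub_eq_add_neg]
    exact gauge_add_le hconv (absorbent_nhds_zero (hopen.mem_nhds h0)) _ _
  _ = gauge s w + gauge s v := by rw [gauge_neg hneg]
  _ < 1 + 1 := add_lt_add (gauge_lt_one_of_mem_of_isOpen hopen hw)
    (gauge_lt_one_of_mem_of_isOpen hopen hv)
  _ = 2 := one_add_one_eq_two

end Gauge

theorem analytic_bounded_image_lipschitz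
    {E F : Type*} [AddCommGroup E] [Module ℂ E] [Module ℝ E] [IsScalarTower ℝ ℂ E]
    [TopologicalSpace E] [IsTopologicalAddGroup E] [ContinuousSMul ℂ E]
    [AddCommGroup F] [Module ℂ F]
    [TopologicalSpace F] [IsTopologicalAddGroup F]
    (U : Set E) (hUo : IsOpen U) (hU0 : (0 : E) ∈ U) (hUconv : Convex ℝ U)
    (hUbal : Balanced ℂ U)
    (f : E → F) (hf : IsCAnalyticOn f U)
    (p : Seminorm ℂ F) (hp : Continuous p)
    (M : ℝ) (hM : ∀ x ∈ U, p (f x) ≤ M) :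
    ∀ v ∈ (3 : ℝ)⁻¹ • U, ∀ w ∈ (3 : ℝ)⁻¹ • U,
      p (f w - f v) ≤ M * gauge ((3 : ℝ)⁻¹ • U) (w - v) := by
  have : ContinuousSMul ℝ E := IsScalarTower.continuousSMul ℂ
  intro v hv w hw
  set s := (3 : ℝ)⁻¹ • U
  have hso : IsOpen s := hUo.smul₀ (by norm_num)
  have hs0 : (0 : E) ∈ s := zero_mem_smul_set hU0
  have hsconv : Convex ℝ s := hUconv.smul _
  have hgauge : gauge s (w - v) < 2 :=
    gauge_sub_lt_two hsconv hs0 hso (fun x => (hUbal.smul (3 : ℝ)⁻¹).neg_mem_iff.2) hv hw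
  have hbound : ∀ t ∈ Ioo (gauge s (w - v)) 2, p (f w - f v) ≤ M * t := by
    rintro t ⟨hgt, ht2⟩
    have ht0 : 0 < t := (gauge_nonneg _).trans_lt hgt
    have hu := inv_smul_mem_of_gauge_lt hsconv hs0 hso hgt
    have hw' : v + (t : ℂ) • t⁻¹ • (w - v) = w := by
      rw [← Complex.coe_algebraMap, algebraMap_smul, smul_inv_smul₀ ht0.ne', add_sub_cancel]
    have := hf.seminorm_sub_le_of_line hp hM
      (fun z hz => add_smul_mem_of_mem_inv_three_smul hUconv hUbal hv hu hz.le)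
      (z := t) (by rwa [Complex.norm_real, Real.norm_of_nonneg ht0.le])
    rwa [hw', Complex.norm_real, Real.norm_of_nonneg ht0.le, mul_div_cancel_left₀ _ two_ne_zero]
      at this
  exact ge_of_tendsto ((continuous_const_mul M).tendsto _ |>.mono_left nhdsWithin_le_nhds)
    (eventually_of_mem (Ioo_mem_nhdsGT hgauge) hbound)
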